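/- Let D, L ∈ ℝ^{n×n} and sᵢ := Σ_{k=1}^{n} L_{k,i}² for i ∈ {1,…,n}. Assume ‖D‖₂ < 1, assume sᵢ > 0 for every i, and let p₁, …, pₙ ∈ (0,1] satisfy pᵢ > 1/(1 + (1 − ‖D‖₂²)/sᵢ) for every i. Then ‖Dᵀ D + Diag(−s₁ + s₁/p₁, …, −sₙ + sₙ/pₙ)‖₂ < 1. -/

import Mathlib

/-!
The triangle inequality gives `‖DᵀD + Diag d‖ ≤ ‖D‖² + maxᵢ |dᵢ|`, since `‖DᵀD‖ = ‖D‖²` and the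
spectral norm of a diagonal matrix is the sup norm of its diagonal. The hypothesis on `pᵢ` is
equivalent to `sᵢ/pᵢ < sᵢ + (1 - ‖D‖²)`, and `pᵢ ≤ 1` gives `dᵢ = sᵢ/pᵢ - sᵢ ≥ 0`, so every
`|dᵢ| < 1 - ‖D‖²`.
-/

open Matrix

/-- The spectral norm (ℓ²-operator norm) of a real square matrix. -/
noncomputable def specNorm {n : ℕ} (M : Matrix (Fin n) (Fin n) ℝ) : ℝ :=
  ‖LinearMap.toContinuousLinearMap (Matrix.toEuclideanLin M)‖

open scoped Matrix.Norms.L2Operator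

lemma specNorm_eq_l2_opNorm {n : ℕ} (M : Matrix (Fin n) (Fin n) ℝ) : specNorm M = ‖M‖ := rfl

lemma l2_opNorm_transpose_mul_self {m n : Type*} [Fintype m] [Fintype n] [DecidableEq n]
    (A : Matrix m n ℝ) : ‖Aᵀ * A‖ = ‖A‖ ^ 2 := by
  rw [← conjTranspose_eq_transpose_of_trivial, l2_opNorm_conjTranspose_mul_self, sq]

lemma abs_neg_add_div_lt_of_inv_one_add_div_lt {s δ p : ℝ} (hs : 0 < s) (hδ : 0 < δ)
    (hp : p ≤ 1) (h : 1 / (1 + δ / s) < p) : |-s + s / p| < δ := by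
  have hsδ : 1 / (1 + δ / s) = s / (s + δ) := by field_simp
  rw [hsδ, div_lt_iff₀ (by positivity)] at h
  have hp0 : 0 < p := pos_of_mul_pos_left (hs.trans h) (by positivity)
  have hle : s ≤ s / p := by rw [le_div_iff₀ hp0]; nlinarith
  have hlt : s / p < s + δ := by rw [div_lt_iff₀ hp0]; linarith
  rw [abs_lt]
  constructor <;> linarith

/-- Let `D, L ∈ ℝ^{n×n}`, `sᵢ := Σₖ L_{k,i}²`. If `‖D‖₂ < 1`, every
`sᵢ > 0`, and `pᵢ ∈ (0,1]` satisfies `pᵢ > 1/(1 + (1 − ‖D‖₂²)/sᵢ)` for every `i`, then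
`‖Dᵀ D + Diag(−s₁ + s₁/p₁, …, −sₙ + sₙ/pₙ)‖₂ < 1`. -/
theorem spectral_norm_lt_one_adaptive
    {n : ℕ} (D L : Matrix (Fin n) (Fin n) ℝ)
    (hD : specNorm D < 1)
    (hs : ∀ i, 0 < ∑ k, (L k i) ^ 2)
    (p : Fin n → ℝ) (hp : ∀ i, p i ∈ Set.Ioc (0 : ℝ) 1)
    (hpgt : ∀ i, p i > 1 / (1 + (1 - specNorm D ^ 2) / (∑ k, (L k i) ^ 2))) :
    specNorm (Dᵀ * D + Matrix.diagonal
      (fun i => -(∑ k, (L k i) ^ 2) + (∑ k, (L k i) ^ 2) / p i)) < 1 := by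
  simp only [specNorm_eq_l2_opNorm] at *
  have hgap : 0 < 1 - ‖D‖ ^ 2 := by nlinarith [norm_nonneg D]
  have hdiag : ‖diagonal (fun i => -(∑ k, (L k i) ^ 2) + (∑ k, (L k i) ^ 2) / p i)‖
      < 1 - ‖D‖ ^ 2 := by
    rw [l2_opNorm_diagonal, pi_norm_lt_iff hgap]
    intro i
    exact abs_neg_add_div_lt_of_inv_one_add_div_lt (hs i) hgap (hp i).2 (hpgt i)
  calc _ ≤ ‖Dᵀ * D‖ + _ := norm_add_le _ _
    _ = ‖D‖ ^ 2 + _ := by rw [l2_opNorm_transpose_mul_self]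
    _ < 1 := by linarith
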